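/- Let Σ ⊆ ℝ^N (N ≥ 2) be a rotation-invariant domain and z : Σ → ℝ continuous. For η ∈ ℝ let e(η) = (cos η, sin η, 0, …, 0) ∈ Sⁿ⁻¹, and for a unit vector e define z_e(x) = z(Γ_e x) - z(σ_e Γ_e x) on Σ₁ = {x ∈ Σ : x₁ > 0}, where Γ_e is a rotation mapping e₁ to e and σ_e is the reflection fixing the hyperplane with normal e. Suppose z_{e(0)} ≡ 0 on Σ₁ and that for some ε ∈ (0, π), z_{e(η)} > 0 on Σ₁ for all η ∈ (0, ε). Then z_{e(η)} > 0 on Σ₁ for all η ∈ (0, π) and z_{e(η)} < 0 on Σ₁ for all η ∈ (-π, 0). -/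

import Mathlib

open Real Set

/-- Rotation by angle `η` in the `(x₁, x₂)`-plane of `ℝ^{N+2}`; it maps `e₁` to
`e(η) = (cos η, sin η, 0, …, 0)`. -/
noncomputable def rotXY {N : ℕ} (η : ℝ) (x : EuclideanSpace ℝ (Fin (N + 2))) :
    EuclideanSpace ℝ (Fin (N + 2)) :=
  WithLp.toLp 2 fun i => if i = 0 then Real.cos η * x 0 - Real.sin η * x 1
    else if i = 1 then Real.sin η * x 0 + Real.cos η * x 1 else x i

/-- Reflection `σ_{e(η)}(x) = x - 2 (x · e(η)) e(η)` across the hyperplane with normal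
`e(η) = (cos η, sin η, 0, …, 0)`. -/
noncomputable def reflXY {N : ℕ} (η : ℝ) (x : EuclideanSpace ℝ (Fin (N + 2))) :
    EuclideanSpace ℝ (Fin (N + 2)) :=
  WithLp.toLp 2 fun i => if i = 0 then x 0 - 2 * (x 0 * Real.cos η + x 1 * Real.sin η) * Real.cos η
    else if i = 1 then x 1 - 2 * (x 0 * Real.cos η + x 1 * Real.sin η) * Real.sin η
    else x i

/-!
Write `x` (with `x₁ = x 0 > 0`) as `x = Γ_φ p` with `p` on the positive `x₁`-axis, so that
`cos φ > 0`, and put `g θ = z (Γ_θ p)`. The hypothesis `z_{e(0)} ≡ 0` says `g (π - θ) = g θ`, and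
`z_{e(δ)} > 0` at `Γ_{θ-δ} p` says `g (θ - 2δ) < g θ` for `0 < δ < ε` whenever `cos (θ - δ) > 0`.
Chaining such steps, `g` is strictly increasing on `[-π/2, π/2]`; with the symmetry and
`2π`-periodicity, `g a < g b` whenever `sin a < sin b`. Finally
`z_{e(η)}(x) = g (η + φ) - g (η + (π - φ))`, and
`sin (η + φ) - sin (η + (π - φ)) = 2 sin η cos φ` has the sign of `sin η`.
-/

theorem strictMonoOn_of_lt_of_sub_lt {β : Type*} [Preorder β] {f : ℝ → β} {I : Set ℝ}
    (hI : I.OrdConnected) {c : ℝ} (hc : 0 < c)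
    (hf : ∀ a ∈ I, ∀ b ∈ I, a < b → b - a < c → f a < f b) : StrictMonoOn f I := by
  have hchain : ∀ n : ℕ, ∀ a ∈ I, ∀ b ∈ I, a < b → b - a < n * (c / 2) → f a < f b := by
    intro n
    induction n with
    | zero => intro a _ b _ hab h; rw [Nat.cast_zero, zero_mul] at h; linarith
    | succ n ih =>
      intro a ha b hb hab h
      by_cases hsmall : b - a < c
      · exact hf a ha b hb hab hsmall
      have hm : b - c / 2 ∈ I := hI.out ha hb ⟨by linarith, by linarith⟩
      calc f a < f (b - c / 2) := ih a ha _ hm (by linarith) (by push_cast at h; linarith)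
        _ < f b := hf _ hm b hb (by linarith) (by linarith)
  intro a ha b hb hab
  obtain ⟨n, hn⟩ := exists_nat_gt ((b - a) / (c / 2))
  exact hchain n a ha b hb hab ((div_lt_iff₀ (by positivity)).1 hn)

theorem Function.Periodic.apply_eq_apply_arcsin_sin {α : Type*} {g : ℝ → α}
    (hper : Function.Periodic g (2 * π)) (hsymm : ∀ θ, g (π - θ) = g θ) (θ : ℝ) :
    g θ = g (arcsin (sin θ)) := by
  have hg : g (toIcoMod two_pi_pos (-(π / 2)) θ) = g θ := by
    rw [← self_sub_toIcoDiv_zsmul, hper.sub_zsmul_eq]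
  have hsin : sin (toIcoMod two_pi_pos (-(π / 2)) θ) = sin θ := by
    rw [← self_sub_toIcoDiv_zsmul, sin_periodic.sub_zsmul_eq]
  obtain ⟨h₁, h₂⟩ := toIcoMod_mem_Ico two_pi_pos (-(π / 2)) θ
  rw [← hg, ← hsin]
  generalize toIcoMod two_pi_pos (-(π / 2)) θ = θ' at h₁ h₂ ⊢
  rcases le_or_gt θ' (π / 2) with h | h
  · rw [arcsin_sin h₁ h]
  · rw [← sin_pi_sub, arcsin_sin (by linarith) (by linarith), hsymm]

theorem Function.Periodic.lt_of_sin_lt {α : Type*} [Preorder α] {g : ℝ → α}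
    (hper : Function.Periodic g (2 * π)) (hsymm : ∀ θ, g (π - θ) = g θ)
    (hmono : StrictMonoOn g (Icc (-(π / 2)) (π / 2)))
    {a b : ℝ} (h : sin a < sin b) : g a < g b := by
  rw [hper.apply_eq_apply_arcsin_sin hsymm a, hper.apply_eq_apply_arcsin_sin hsymm b]
  exact hmono (arcsin_mem_Icc _) (arcsin_mem_Icc _)
    (strictMonoOn_arcsin ⟨neg_one_le_sin a, sin_le_one a⟩ ⟨neg_one_le_sin b, sin_le_one b⟩ h)

theorem sin_add_sub_sin_add_pi_sub (η φ : ℝ) :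
    sin (η + φ) - sin (η + (π - φ)) = 2 * sin η * cos φ := by
  rw [show η + (π - φ) = π - (φ - η) by ring, sin_pi_sub, sin_add, sin_sub]
  ring

section Plane

variable {N : ℕ}

theorem ext_of_apply_zero_one {x y : EuclideanSpace ℝ (Fin (N + 2))} (h₀ : x 0 = y 0)
    (h₁ : x 1 = y 1) (h : ∀ i, i ≠ 0 → i ≠ 1 → x i = y i) : x = y := by
  ext i
  by_cases hi₀ : i = 0
  · exact hi₀ ▸ h₀
  by_cases hi₁ : i = 1
  · exact hi₁ ▸ h₁
  exact h i hi₀ hi₁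

@[simp]
theorem rotXY_apply_zero (η : ℝ) (x : EuclideanSpace ℝ (Fin (N + 2))) :
    rotXY η x 0 = cos η * x 0 - sin η * x 1 := rfl

@[simp]
theorem rotXY_apply_one (η : ℝ) (x : EuclideanSpace ℝ (Fin (N + 2))) :
    rotXY η x 1 = sin η * x 0 + cos η * x 1 := by
  simp [rotXY]

theorem rotXY_apply_of_ne (η : ℝ) (x : EuclideanSpace ℝ (Fin (N + 2))) {i : Fin (N + 2)}
    (h₀ : i ≠ 0) (h₁ : i ≠ 1) : rotXY η x i = x i := by
  simp [rotXY, h₀, h₁]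

@[simp]
theorem reflXY_apply_zero (η : ℝ) (x : EuclideanSpace ℝ (Fin (N + 2))) :
    reflXY η x 0 = x 0 - 2 * (x 0 * cos η + x 1 * sin η) * cos η := rfl

@[simp]
theorem reflXY_apply_one (η : ℝ) (x : EuclideanSpace ℝ (Fin (N + 2))) :
    reflXY η x 1 = x 1 - 2 * (x 0 * cos η + x 1 * sin η) * sin η := by
  simp [reflXY]

theorem reflXY_apply_of_ne (η : ℝ) (x : EuclideanSpace ℝ (Fin (N + 2))) {i : Fin (N + 2)}
    (h₀ : i ≠ 0) (h₁ : i ≠ 1) : reflXY η x i = x i := by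
  simp [reflXY, h₀, h₁]

theorem rotXY_zero (x : EuclideanSpace ℝ (Fin (N + 2))) : rotXY 0 x = x :=
  ext_of_apply_zero_one (by simp) (by simp) fun _ h₀ h₁ => rotXY_apply_of_ne 0 x h₀ h₁

theorem rotXY_rotXY (α β : ℝ) (x : EuclideanSpace ℝ (Fin (N + 2))) :
    rotXY α (rotXY β x) = rotXY (α + β) x :=
  ext_of_apply_zero_one
    (by simp only [rotXY_apply_zero, rotXY_apply_one, cos_add, sin_add]; ring)
    (by simp only [rotXY_apply_zero, rotXY_apply_one, cos_add, sin_add]; ring)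
    fun _ h₀ h₁ => by simp only [rotXY_apply_of_ne _ _ h₀ h₁]

theorem rotXY_add_two_pi (α : ℝ) (x : EuclideanSpace ℝ (Fin (N + 2))) :
    rotXY (α + 2 * π) x = rotXY α x := by
  simp only [rotXY, cos_add_two_pi, sin_add_two_pi]

theorem reflXY_zero_apply_zero (x : EuclideanSpace ℝ (Fin (N + 2))) :
    reflXY 0 x 0 = -x 0 := by
  rw [reflXY_apply_zero, cos_zero, sin_zero]
  ring

theorem reflXY_zero_apply_one (x : EuclideanSpace ℝ (Fin (N + 2))) :
    reflXY 0 x 1 = x 1 := by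
  rw [reflXY_apply_one, sin_zero]
  ring

theorem reflXY_zero_reflXY_zero (x : EuclideanSpace ℝ (Fin (N + 2))) :
    reflXY 0 (reflXY 0 x) = x :=
  ext_of_apply_zero_one (by rw [reflXY_zero_apply_zero, reflXY_zero_apply_zero, neg_neg])
    (by rw [reflXY_zero_apply_one, reflXY_zero_apply_one])
    fun _ h₀ h₁ => by simp only [reflXY_apply_of_ne _ _ h₀ h₁]

theorem reflXY_zero_of_apply_zero {x : EuclideanSpace ℝ (Fin (N + 2))} (hx : x 0 = 0) :
    reflXY 0 x = x :=
  ext_of_apply_zero_one (by rw [reflXY_zero_apply_zero, hx, neg_zero]) (reflXY_zero_apply_one x)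
    fun _ h₀ h₁ => reflXY_apply_of_ne 0 x h₀ h₁

theorem reflXY_rotXY (η : ℝ) (x : EuclideanSpace ℝ (Fin (N + 2))) :
    reflXY η (rotXY η x) = rotXY η (reflXY 0 x) :=
  ext_of_apply_zero_one
    (by
      simp only [reflXY_apply_zero, reflXY_apply_one, rotXY_apply_zero, rotXY_apply_one,
        cos_zero, sin_zero]
      linear_combination (-(2 * x 0 * cos η)) * sin_sq_add_cos_sq η)
    (by
      simp only [reflXY_apply_zero, reflXY_apply_one, rotXY_apply_zero, rotXY_apply_one,
        cos_zero, sin_zero]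
      linear_combination (-(2 * x 0 * sin η)) * sin_sq_add_cos_sq η)
    fun _ h₀ h₁ => by simp only [reflXY_apply_of_ne _ _ h₀ h₁, rotXY_apply_of_ne _ _ h₀ h₁]

theorem reflXY_zero_rotXY_of_apply_one {p : EuclideanSpace ℝ (Fin (N + 2))} (hp : p 1 = 0)
    (θ : ℝ) : reflXY 0 (rotXY θ p) = rotXY (π - θ) p :=
  ext_of_apply_zero_one
    (by
      simp only [reflXY_zero_apply_zero, rotXY_apply_zero, hp, cos_pi_sub]
      ring)
    (by simp only [reflXY_zero_apply_one, rotXY_apply_one, hp, sin_pi_sub, mul_zero])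
    fun _ h₀ h₁ => by simp only [reflXY_apply_of_ne _ _ h₀ h₁, rotXY_apply_of_ne _ _ h₀ h₁]

theorem exists_eq_rotXY (x : EuclideanSpace ℝ (Fin (N + 2))) :
    ∃ φ : ℝ, ∃ p : EuclideanSpace ℝ (Fin (N + 2)), 0 ≤ p 0 ∧ p 1 = 0 ∧ x = rotXY φ p := by
  set w : ℂ := ⟨x 0, x 1⟩
  have hre : ‖w‖ * cos w.arg = x 0 := Complex.norm_mul_cos_arg w
  have him : ‖w‖ * sin w.arg = x 1 := Complex.norm_mul_sin_arg w
  refine ⟨w.arg, rotXY (-w.arg) x, ?_, ?_, by rw [rotXY_rotXY, add_neg_cancel, rotXY_zero]⟩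
  · have : rotXY (-w.arg) x 0 = ‖w‖ := by
      simp only [rotXY_apply_zero, cos_neg, sin_neg, ← hre, ← him]
      linear_combination ‖w‖ * sin_sq_add_cos_sq w.arg
    exact this ▸ norm_nonneg w
  · simp only [rotXY_apply_one, cos_neg, sin_neg, ← hre, ← him]
    ring

/-- The paper's `z_{e(η)}`, with `Γ_{e(η)} = rotXY η` and `σ_{e(η)} = reflXY η`. -/
noncomputable def reflDiff (z : EuclideanSpace ℝ (Fin (N + 2)) → ℝ) (η : ℝ)
    (x : EuclideanSpace ℝ (Fin (N + 2))) : ℝ :=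
  z (rotXY η x) - z (reflXY η (rotXY η x))

variable {S : Set (EuclideanSpace ℝ (Fin (N + 2)))} {z : EuclideanSpace ℝ (Fin (N + 2)) → ℝ}

theorem reflDiff_rotXY {p : EuclideanSpace ℝ (Fin (N + 2))} (hp : p 1 = 0) (η θ : ℝ) :
    reflDiff z η (rotXY θ p) = z (rotXY (η + θ) p) - z (rotXY (η + (π - θ)) p) := by
  rw [reflDiff, reflXY_rotXY, reflXY_zero_rotXY_of_apply_one hp, rotXY_rotXY, rotXY_rotXY]

theorem apply_reflXY_zero_eq (hS : ∀ x ∈ S, reflXY 0 x ∈ S)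
    (h0 : ∀ x ∈ S, 0 < x 0 → reflDiff z 0 x = 0) {y : EuclideanSpace ℝ (Fin (N + 2))}
    (hy : y ∈ S) : z (reflXY 0 y) = z y := by
  rcases lt_trichotomy (y 0) 0 with hneg | hzero | hpos
  · have h := h0 _ (hS y hy) (by rw [reflXY_zero_apply_zero]; linarith)
    rw [reflDiff, rotXY_zero, reflXY_zero_reflXY_zero] at h
    linarith
  · rw [reflXY_zero_of_apply_zero hzero]
  · have h := h0 y hy hpos
    rw [reflDiff, rotXY_zero] at h
    linarith

theorem apply_rotXY_lt_apply_rotXY_of_sin_lt (hSrot : ∀ η, ∀ x ∈ S, rotXY η x ∈ S)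
    (hsymm : ∀ y ∈ S, z (reflXY 0 y) = z y) {ε : ℝ} (hε : 0 < ε)
    (hpos : ∀ η, 0 < η → η < ε → ∀ x ∈ S, 0 < x 0 → 0 < reflDiff z η x)
    {p : EuclideanSpace ℝ (Fin (N + 2))} (hpS : p ∈ S) (hp₀ : 0 < p 0) (hp₁ : p 1 = 0)
    {a b : ℝ} (hab : sin a < sin b) : z (rotXY a p) < z (rotXY b p) := by
  set g : ℝ → ℝ := fun θ => z (rotXY θ p)
  have hper : Function.Periodic g (2 * π) := fun θ => by simp only [g, rotXY_add_two_pi]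
  have hg_symm : ∀ θ, g (π - θ) = g θ := fun θ => by
    simp only [g]
    rw [← reflXY_zero_rotXY_of_apply_one hp₁, hsymm _ (hSrot θ p hpS)]
  have hstep : ∀ a ∈ Icc (-(π / 2)) (π / 2), ∀ b ∈ Icc (-(π / 2)) (π / 2),
      a < b → b - a < 2 * ε → g a < g b := by
    rintro a ⟨ha, -⟩ b ⟨-, hb⟩ hab hba
    have hcos : 0 < cos ((a + b) / 2) := cos_pos_of_mem_Ioo ⟨by linarith, by linarith⟩
    have h := hpos ((b - a) / 2) (by linarith) (by linarith) _ (hSrot ((a + b) / 2) p hpS)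
      (by simpa [hp₁] using mul_pos hcos hp₀)
    rw [reflDiff_rotXY hp₁, show (b - a) / 2 + (a + b) / 2 = b by ring,
      show (b - a) / 2 + (π - (a + b) / 2) = π - a by ring] at h
    exact hg_symm a ▸ sub_pos.1 h
  exact hper.lt_of_sin_lt hg_symm
    (strictMonoOn_of_lt_of_sub_lt ordConnected_Icc (by linarith) hstep) hab

theorem reflDiff_pos_of_sin_pos_and_neg_of_sin_neg (hSrot : ∀ η, ∀ x ∈ S, rotXY η x ∈ S)
    (hsymm : ∀ y ∈ S, z (reflXY 0 y) = z y) {ε : ℝ} (hε : 0 < ε)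
    (hpos : ∀ η, 0 < η → η < ε → ∀ x ∈ S, 0 < x 0 → 0 < reflDiff z η x)
    {x : EuclideanSpace ℝ (Fin (N + 2))} (hx : x ∈ S) (hx₀ : 0 < x 0) (η : ℝ) :
    (0 < sin η → 0 < reflDiff z η x) ∧ (sin η < 0 → reflDiff z η x < 0) := by
  obtain ⟨φ, p, hp₀, hp₁, rfl⟩ := exists_eq_rotXY x
  have hpS : p ∈ S := by
    simpa only [rotXY_rotXY, neg_add_cancel, rotXY_zero] using hSrot (-φ) _ hx
  have hprod : 0 < cos φ * p 0 := by simpa [hp₁] using hx₀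
  have hcos : 0 < cos φ := pos_of_mul_pos_left hprod hp₀
  have hp₀' : 0 < p 0 := pos_of_mul_pos_right hprod hcos.le
  have hlt : ∀ a b, sin a < sin b → z (rotXY a p) < z (rotXY b p) := fun _ _ =>
    apply_rotXY_lt_apply_rotXY_of_sin_lt hSrot hsymm hε hpos hpS hp₀' hp₁
  have hsin := sin_add_sub_sin_add_pi_sub η φ
  rw [reflDiff_rotXY hp₁, sub_pos, sub_neg]
  exact ⟨fun h => hlt _ _ (by nlinarith), fun h => hlt _ _ (by nlinarith)⟩

end Plane

theorem asymptotic_symmetry_stmt_6_general {N : ℕ}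
    (S : Set (EuclideanSpace ℝ (Fin (N + 2))))
    (hSrot : ∀ η : ℝ, ∀ x ∈ S, rotXY η x ∈ S)
    (hSrefl : ∀ η : ℝ, ∀ x ∈ S, reflXY η x ∈ S)
    (z : EuclideanSpace ℝ (Fin (N + 2)) → ℝ)
    (h0 : ∀ x ∈ S, 0 < x 0 → z (rotXY 0 x) - z (reflXY 0 (rotXY 0 x)) = 0)
    (ε : ℝ) (hε : 0 < ε)
    (hpos : ∀ η : ℝ, 0 < η → η < ε → ∀ x ∈ S, 0 < x 0 →
      0 < z (rotXY η x) - z (reflXY η (rotXY η x))) :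
    (∀ η : ℝ, 0 < η → η < π → ∀ x ∈ S, 0 < x 0 →
      0 < z (rotXY η x) - z (reflXY η (rotXY η x))) ∧
    (∀ η : ℝ, -π < η → η < 0 → ∀ x ∈ S, 0 < x 0 →
      z (rotXY η x) - z (reflXY η (rotXY η x)) < 0) := by
  have hsymm : ∀ y ∈ S, z (reflXY 0 y) = z y := fun _ hy =>
    apply_reflXY_zero_eq (hSrefl 0) h0 hy
  refine ⟨fun η h₁ h₂ x hx hx₀ => ?_, fun η h₁ h₂ x hx hx₀ => ?_⟩
  · exact (reflDiff_pos_of_sin_pos_and_neg_of_sin_neg hSrot hsymm hε hpos hx hx₀ η).1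
      (sin_pos_of_pos_of_lt_pi h₁ h₂)
  · exact (reflDiff_pos_of_sin_pos_and_neg_of_sin_neg hSrot hsymm hε hpos hx hx₀ η).2
      (sin_neg_of_neg_of_neg_pi_lt h₂ h₁)

theorem asymptotic_symmetry_stmt_6 {N : ℕ}
    (S : Set (EuclideanSpace ℝ (Fin (N + 2)))) (hSopen : IsOpen S)
    (hSrad : ∀ f : EuclideanSpace ℝ (Fin (N + 2)) ≃ₗᵢ[ℝ] EuclideanSpace ℝ (Fin (N + 2)),
      f '' S = S)
    (hSrot : ∀ η : ℝ, ∀ x ∈ S, rotXY η x ∈ S)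
    (hSrefl : ∀ η : ℝ, ∀ x ∈ S, reflXY η x ∈ S)
    (z : EuclideanSpace ℝ (Fin (N + 2)) → ℝ) (hz : ContinuousOn z S)
    (h0 : ∀ x ∈ S, 0 < x 0 → z (rotXY 0 x) - z (reflXY 0 (rotXY 0 x)) = 0)
    (ε : ℝ) (hε : 0 < ε) (hεπ : ε < π)
    (hpos : ∀ η : ℝ, 0 < η → η < ε → ∀ x ∈ S, 0 < x 0 →
      0 < z (rotXY η x) - z (reflXY η (rotXY η x))) :
    (∀ η : ℝ, 0 < η → η < π → ∀ x ∈ S, 0 < x 0 →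
      0 < z (rotXY η x) - z (reflXY η (rotXY η x))) ∧
    (∀ η : ℝ, -π < η → η < 0 → ∀ x ∈ S, 0 < x 0 →
      z (rotXY η x) - z (reflXY η (rotXY η x)) < 0) :=
  asymptotic_symmetry_stmt_6_general S hSrot hSrefl z h0 ε hε hpos
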